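/- Let η > 0, p ∈ (0,1) and ξ > η. Then the function α ↦ erf( ( ξ − (α·p + η) ) / √( 2·(α·p·(1−p) + η) ) ) is convex on the set { α > 0 : α·p + η > ξ }, where erf is the error function. -/

import Mathlib

/-!
`erf` is nondecreasing, and convex on `(-∞, 0]` because its derivative `2/√π · exp (-x²)`
increases there. Since `ζ ≤ 0` on the set, it suffices that `ζ` is convex. With the affine
function `w = 2(αp(1-p) + η) > 0` and `a = 2((1-p)ξ + pη) ≥ 0` one has
`ζ = (a - w) / (2(1-p)√w)`, and `w ↦ (a - w)/√w = a/√w - √w` is convex: `1/√w` is a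
decreasing convex function of the concave `√w`.
-/

open MeasureTheory Real

noncomputable def erf (x : ℝ) : ℝ :=
  (2 / Real.sqrt π) * ∫ u in (0:ℝ)..x, Real.exp (-u ^ 2)

open Set

section Composition

variable {𝕜 E α β : Type*} [Semiring 𝕜] [PartialOrder 𝕜] [AddCommMonoid E]
  [AddCommMonoid α] [PartialOrder α] [AddCommMonoid β] [PartialOrder β]
  [SMul 𝕜 E] [SMul 𝕜 α] [SMul 𝕜 β] {s : Set E} {t : Set β} {f : E → β} {g : β → α}

theorem ConvexOn.comp_of_mapsTo (hg : ConvexOn 𝕜 t g) (hf : ConvexOn 𝕜 s f)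
    (hg' : MonotoneOn g t) (hst : MapsTo f s t) : ConvexOn 𝕜 s (g ∘ f) :=
  ⟨hf.1, fun _ hx _ hy _ _ ha hb hab =>
    (hg' (hst (hf.1 hx hy ha hb hab)) (hg.1 (hst hx) (hst hy) ha hb hab)
      (hf.2 hx hy ha hb hab)).trans (hg.2 (hst hx) (hst hy) ha hb hab)⟩

theorem ConvexOn.comp_concaveOn_of_mapsTo (hg : ConvexOn 𝕜 t g) (hf : ConcaveOn 𝕜 s f)
    (hg' : AntitoneOn g t) (hst : MapsTo f s t) : ConvexOn 𝕜 s (g ∘ f) :=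
  ConvexOn.comp_of_mapsTo (β := βᵒᵈ) (f := OrderDual.toDual ∘ f) (g := g ∘ OrderDual.ofDual)
    hg hf hg'.dual_left hst

end Composition

lemma convexOn_inv_sqrt : ConvexOn ℝ (Ioi 0) fun x : ℝ => (√x)⁻¹ := by
  have hinv : ConvexOn ℝ (Ioi 0) fun y : ℝ => y⁻¹ := by
    simpa using convexOn_zpow (𝕜 := ℝ) (-1)
  exact hinv.comp_concaveOn_of_mapsTo
    (strictConcaveOn_sqrt.concaveOn.subset Ioi_subset_Ici_self (convex_Ioi 0))
    (fun _ hx _ _ hxy => inv_anti₀ hx hxy) (fun _ hx => sqrt_pos.2 hx)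

lemma convexOn_sub_div_sqrt {a : ℝ} (ha : 0 ≤ a) :
    ConvexOn ℝ (Ioi 0) fun x : ℝ => (a - x) / √x := by
  refine ((convexOn_inv_sqrt.smul ha).add
    (strictConcaveOn_sqrt.concaveOn.neg.subset Ioi_subset_Ici_self (convex_Ioi 0))).congr
    fun x _ => ?_
  simp only [smul_eq_mul, Pi.add_apply, Pi.neg_apply]
  rw [sub_div, div_sqrt, div_eq_mul_inv]
  ring

lemma hasDerivAt_erf (x : ℝ) : HasDerivAt erf (2 / √π * exp (-x ^ 2)) x :=
  ((by fun_prop : Continuous fun u : ℝ => exp (-u ^ 2)).integral_hasStrictDerivAt 0 x)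
    |>.hasDerivAt.const_mul _

lemma monotone_erf : Monotone erf :=
  monotone_of_deriv_nonneg (fun x => (hasDerivAt_erf x).differentiableAt)
    fun x => (hasDerivAt_erf x).deriv ▸ by positivity

lemma convexOn_erf_Iic : ConvexOn ℝ (Iic 0) erf := by
  have hderiv : deriv erf = fun x => 2 / √π * exp (-x ^ 2) :=
    funext fun x => (hasDerivAt_erf x).deriv
  refine MonotoneOn.convexOn_of_deriv (convex_Iic 0)
    (fun x _ => (hasDerivAt_erf x).continuousAt.continuousWithinAt)
    (fun x _ => (hasDerivAt_erf x).differentiableAt.differentiableWithinAt) ?_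
  rw [hderiv, interior_Iic]
  intro x _ y hy hxy
  have : y ^ 2 ≤ x ^ 2 := by nlinarith [mem_Iio.1 hy]
  dsimp only
  gcongr

lemma convexOn_zeta {η p ξ : ℝ} (hη : 0 < η) (hp : p ∈ Ioo (0:ℝ) 1) (hξ : η < ξ) :
    ConvexOn ℝ (Ioi 0) fun α => (ξ - (α * p + η)) / √(2 * (α * p * (1 - p) + η)) := by
  obtain ⟨hp₀, hp₁⟩ := hp
  let w : ℝ →ᵃ[ℝ] ℝ :=
    ((2 * p * (1 - p)) • LinearMap.id).toAffineMap + AffineMap.const ℝ ℝ (2 * η)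
  have hw (α : ℝ) : w α = 2 * (α * p * (1 - p) + η) := by
    change 2 * p * (1 - p) * α + 2 * η = _
    ring
  have ha : 0 ≤ 2 * ((1 - p) * ξ + p * η) := by nlinarith
  have hconv := ((convexOn_sub_div_sqrt ha).comp_affineMap w).smul
    (inv_nonneg.2 (by linarith : (0:ℝ) ≤ 2 * (1 - p)))
  refine (hconv.subset (fun α hα => ?_) (convex_Ioi 0)).congr fun α _ => ?_
  · have : 0 < α * p * (1 - p) := mul_pos (mul_pos hα hp₀) (sub_pos.2 hp₁)
    simp only [mem_preimage, mem_Ioi, hw]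
    linarith
  · have : 1 - p ≠ 0 := by linarith
    simp only [Function.comp_apply, hw, smul_eq_mul]
    field_simp
    ring

/-- Convexity in the number of released molecules `α` of `erf(ζ(α))` on the set where
`α > 0` and `αp + η > ξ`. -/
theorem erf_zeta_convexOn (η p ξ : ℝ) (hη : 0 < η) (hp : p ∈ Set.Ioo (0:ℝ) 1) (hξ : η < ξ) :
    ConvexOn ℝ {α : ℝ | 0 < α ∧ ξ < α * p + η}
      (fun α =>
        erf ((ξ - (α * p + η)) / Real.sqrt (2 * (α * p * (1 - p) + η)))) := by
  have hmono : Monotone fun α : ℝ => α * p + η := (monotone_id.mul_const hp.1.le).add_const η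
  have hS : Convex ℝ {α : ℝ | 0 < α ∧ ξ < α * p + η} :=
    (hmono.monotoneOn _).convex_gt (convex_Ioi 0) ξ
  refine convexOn_erf_Iic.comp_of_mapsTo ((convexOn_zeta hη hp hξ).subset (fun _ h => h.1) hS)
    (monotone_erf.monotoneOn _) fun α hα => ?_
  exact div_nonpos_of_nonpos_of_nonneg (by linarith [hα.2]) (sqrt_nonneg _)
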